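/- arXiv:2412.00697 — 2 statements merged into one kernel-verified Lean document; each statement's English description precedes it below -/
import Mathlib

section
/- The function f(P_S, P_{R_1}, ..., P_{R_K}) = Σ_{k∈S} [ (a_k P_{R_k}) (c_k P_S / Σ_j ζ̂_j P_{R_j}) ] / [ 1 + a_k P_{R_k} + c_k P_S / Σ_j ζ̂_j P_{R_j} ], with all a_k, c_k, ζ̂_j > 0, is not a concave function of (P_S, P_{R_1},...,P_{R_K}) on the positive orthant in general; in particular for K = 1 there exist positive parameters a, c, ζ̂ for which the Hessian of f(P_S, P_R) = (a P_R · c P_S/(ζ̂ P_R)) / (1 + a P_R + c P_S/(ζ̂ P_R)) is not negative semidefinite at some point. -/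
open Set

/-- The surrogate rate objective is not concave on the positive orthant in
general: already for `K = 1` there exist positive parameters `a, c, ζ̂` for
which `f(P_S, P_R) = (a P_R · c P_S/(ζ̂ P_R))/(1 + a P_R + c P_S/(ζ̂ P_R))`
fails to be concave on `{P_S > 0, P_R > 0}`. -/
theorem stmt_6 :
    ∃ (a c ζ : ℝ), 0 < a ∧ 0 < c ∧ 0 < ζ ∧
      ¬ ConcaveOn ℝ {p : ℝ × ℝ | 0 < p.1 ∧ 0 < p.2}
        (fun p : ℝ × ℝ =>
          (a * p.2 * (c * p.1 / (ζ * p.2))) /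
            (1 + a * p.2 + c * p.1 / (ζ * p.2))) := by
  refine ⟨1, 1, 1, one_pos, one_pos, one_pos, fun h => ?_⟩
  have hx : ((1 : ℝ), (10 : ℝ)) ∈ {p : ℝ × ℝ | 0 < p.1 ∧ 0 < p.2} := by
    constructor <;> norm_num
  have hy : ((5 : ℝ), (2 : ℝ)) ∈ {p : ℝ × ℝ | 0 < p.1 ∧ 0 < p.2} := by
    constructor <;> norm_num
  have := h.2 hx hy (by norm_num : (0:ℝ) ≤ 1/2) (by norm_num : (0:ℝ) ≤ 1/2)
    (by norm_num)
  simp only [Prod.smul_mk, smul_eq_mul, Prod.mk_add_mk] at this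
  norm_num at this
end

section
/- If (x*, y*) is a limit point of the alternating maximization sequence for a continuous function f(x, y) on a compact product set X × Y ⊆ ℝ^m × ℝ^n such that f(·, y) is concave on convex X for each y and f(x, ·) is concave on convex Y for each x, and the per-block maximizers are unique, then (x*, y*) is a coordinatewise maximum: f(x*, y*) ≥ f(x, y*) for all x ∈ X and f(x*, y*) ≥ f(x*, y) for all y ∈ Y. -/
open Set Filter Topology

/-- Convergence guarantee of alternating (block-coordinate) maximization for a
continuous biconcave function on a compact product of convex sets with unique
per-block maximizers: any limit point of the alternating sequence is a
coordinatewise maximum. -/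
theorem stmt_17 (m n : ℕ) (X : Set (Fin m → ℝ)) (Y : Set (Fin n → ℝ))
    (hXc : Convex ℝ X) (hXk : IsCompact X) (hXne : X.Nonempty)
    (hYc : Convex ℝ Y) (hYk : IsCompact Y) (hYne : Y.Nonempty)
    (f : (Fin m → ℝ) → (Fin n → ℝ) → ℝ)
    (hf : Continuous fun p : (Fin m → ℝ) × (Fin n → ℝ) => f p.1 p.2)
    (hconcX : ∀ y ∈ Y, ConcaveOn ℝ X (fun x => f x y))
    (hconcY : ∀ x ∈ X, ConcaveOn ℝ Y (fun y => f x y))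
    (huniqX : ∀ y ∈ Y, ∃! x, x ∈ X ∧ ∀ x' ∈ X, f x' y ≤ f x y)
    (huniqY : ∀ x ∈ X, ∃! y, y ∈ Y ∧ ∀ y' ∈ Y, f x y' ≤ f x y)
    (x : ℕ → (Fin m → ℝ)) (y : ℕ → (Fin n → ℝ))
    (hx0 : x 0 ∈ X) (hy0 : y 0 ∈ Y)
    (hxupd : ∀ N : ℕ,
      x (N + 1) ∈ X ∧ ∀ x' ∈ X, f x' (y N) ≤ f (x (N + 1)) (y N))
    (hyupd : ∀ N : ℕ,
      y (N + 1) ∈ Y ∧ ∀ y' ∈ Y, f (x (N + 1)) y' ≤ f (x (N + 1)) (y (N + 1)))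
    (xstar : Fin m → ℝ) (ystar : Fin n → ℝ)
    (hlim : ∃ φ : ℕ → ℕ, StrictMono φ ∧
      Tendsto (fun N => (x (φ N), y (φ N))) atTop (𝓝 (xstar, ystar))) :
    (∀ x' ∈ X, f x' ystar ≤ f xstar ystar) ∧
      (∀ y' ∈ Y, f xstar y' ≤ f xstar ystar) := by

  classical
  obtain ⟨φ, hφ, hφlim⟩ := hlim
  have hxmem : ∀ N, x N ∈ X := by
    intro N; cases N with
    | zero => exact hx0
    | succ N => exact (hxupd N).1
  have hymem : ∀ N, y N ∈ Y := by
    intro N; cases N with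
    | zero => exact hy0
    | succ N => exact (hyupd N).1
  set a : ℕ → ℝ := fun N => f (x (N+1)) (y N) with ha
  set b : ℕ → ℝ := fun N => f (x (N+1)) (y (N+1)) with hb
  have hab : ∀ N, a N ≤ b N := fun N => (hyupd N).2 _ (hymem N)
  have hba : ∀ N, b N ≤ a (N+1) := fun N => (hxupd (N+1)).2 _ (hxmem (N+1))
  have hamono : Monotone a := monotone_nat_of_le_succ fun N => (hab N).trans (hba N)
  obtain ⟨p, hp, hpmax⟩ := (hXk.prod hYk).exists_isMaxOn (hXne.prod hYne) hf.continuousOn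
  have habdd : BddAbove (Set.range a) := by
    refine ⟨f p.1 p.2, ?_⟩
    rintro _ ⟨N, rfl⟩
    exact hpmax (show ((x (N+1), y N) : _ × _) ∈ X ×ˢ Y from ⟨hxmem _, hymem _⟩)
  obtain ⟨L, hL⟩ : ∃ L, Tendsto a atTop (𝓝 L) := ⟨_, tendsto_atTop_ciSup hamono habdd⟩
  have hbL : Tendsto b atTop (𝓝 L) :=
    tendsto_of_tendsto_of_tendsto_of_le_of_le hL
      (hL.comp (tendsto_add_atTop_nat 1)) hab hba
  have hxlim : Tendsto (fun k => x (φ k)) atTop (𝓝 xstar) :=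
    (continuous_fst.tendsto _).comp hφlim
  have hylim : Tendsto (fun k => y (φ k)) atTop (𝓝 ystar) :=
    (continuous_snd.tendsto _).comp hφlim
  have hxstar : xstar ∈ X :=
    hXk.isClosed.mem_of_tendsto hxlim (Eventually.of_forall fun k => hxmem _)
  have hystar : ystar ∈ Y :=
    hYk.isClosed.mem_of_tendsto hylim (Eventually.of_forall fun k => hymem _)
  have hφge : ∀ k, k ≤ φ k := fun k => hφ.le_apply
  have hφtop : Tendsto φ atTop atTop := hφ.tendsto_atTop
  have hfk : Tendsto (fun k => f (x (φ k)) (y (φ k))) atTop (𝓝 (f xstar ystar)) :=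
    (hf.tendsto _).comp hφlim
  have hbφ : Tendsto (fun k => b (φ k - 1)) atTop (𝓝 L) := by
    refine hbL.comp (tendsto_atTop_atTop.2 fun N => ⟨N+1, fun k hk => ?_⟩)
    have := hφge k; omega
  have heq : (fun k => b (φ k - 1)) =ᶠ[atTop] fun k => f (x (φ k)) (y (φ k)) := by
    filter_upwards [eventually_ge_atTop 1] with k hk
    have h1 : 1 ≤ φ k := le_trans hk (hφge k)
    have h2 : φ k - 1 + 1 = φ k := Nat.succ_pred_eq_of_pos h1
    simp only [hb, h2]
  have hLval : L = f xstar ystar := tendsto_nhds_unique (hbφ.congr' heq) hfk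
  have haφ : Tendsto (fun k => a (φ k)) atTop (𝓝 L) := hL.comp hφtop
  have claim1 : ∀ x' ∈ X, f x' ystar ≤ f xstar ystar := by
    intro x' hx'
    have h1 : Tendsto (fun k => f x' (y (φ k))) atTop (𝓝 (f x' ystar)) :=
      ((hf.comp (Continuous.prodMk_right x')).tendsto _).comp hylim
    have := le_of_tendsto_of_tendsto' h1 haφ fun k => (hxupd (φ k)).2 x' hx'
    rwa [hLval] at this
  refine ⟨claim1, ?_⟩
  -- extract convergent subsequence of x (φ k + 1)
  obtain ⟨xhat, hxhat, ψ, hψ, hxhatlim⟩ :=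
    hXk.tendsto_subseq (x := fun k => x (φ k + 1)) (fun k => hxmem _)
  have hψtop : Tendsto ψ atTop atTop := hψ.tendsto_atTop
  have hylimψ : Tendsto (fun k => y (φ (ψ k))) atTop (𝓝 ystar) := hylim.comp hψtop
  have haψ : Tendsto (fun k => a (φ (ψ k))) atTop (𝓝 L) := haφ.comp hψtop
  have hbψ : Tendsto (fun k => b (φ (ψ k))) atTop (𝓝 L) := (hbL.comp hφtop).comp hψtop
  have hpair : Tendsto (fun k => ((fun k => x (φ k + 1)) (ψ k), y (φ (ψ k)))) atTop
      (𝓝 (xhat, ystar)) := hxhatlim.prodMk_nhds hylimψ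
  have haval : Tendsto (fun k => a (φ (ψ k))) atTop (𝓝 (f xhat ystar)) :=
    (hf.tendsto _).comp hpair
  have hxhatL : f xhat ystar = L := tendsto_nhds_unique haval haψ
  -- xhat is a maximizer of f · ystar, and so is xstar; uniqueness gives xhat = xstar
  obtain ⟨x₀, hx₀, hx₀uniq⟩ := huniqX ystar hystar
  have hxhatmax : ∀ x' ∈ X, f x' ystar ≤ f xhat ystar := by
    intro x' hx'
    rw [hxhatL, hLval]; exact claim1 x' hx'
  have hxstarmax : ∀ x' ∈ X, f x' ystar ≤ f xstar ystar := claim1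
  have hxeq : xhat = xstar := by
    rw [hx₀uniq xhat ⟨hxhat, hxhatmax⟩, hx₀uniq xstar ⟨hxstar, hxstarmax⟩]
  intro y' hy'
  have h1 : Tendsto (fun k => f (x (φ (ψ k) + 1)) y') atTop (𝓝 (f xhat y')) := by
    have : Tendsto (fun k => (x (φ (ψ k) + 1), y')) atTop (𝓝 (xhat, y')) :=
      hxhatlim.prodMk_nhds tendsto_const_nhds
    exact (hf.tendsto _).comp this
  have h2 := le_of_tendsto_of_tendsto' h1 hbψ fun k => (hyupd (φ (ψ k))).2 y' hy'
  rw [hxeq, hLval] at h2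
  exact h2
end
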